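/- Let T be a densely defined C-selfadjoint operator in a Hilbert space H with polar decomposition T = U|T|. Then there exists an antilinear partial conjugation J (an antilinear partial isometry with J² equal to the orthogonal projection onto the closure of the range of |T|, and ⟨Jf, Jg⟩ = ⟨g, f⟩ on its initial space) such that U = CJ and J commutes with |T| (J|T| = |T|J). -/

import Mathlib

/-!
With `J = C U` and `W = U† C`, the identity `T* = C T C` becomes `R W = J R` (domains included),
and since `U` is a partial isometry with initial space `K = closure (ran R)`, `W J` is the
projection onto `K`. From this `J` and `W` are mutually inverse antiunitary maps of `K` with
`R J = W R`. For `y ∈ K ∩ dom R` the quadratic form `q(v) = ⟪v, R v⟫` satisfies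
`q(J y - W y) = q(J y) + q(W y) - 2 q(y) ≥ 0`, so `q` is convex and bounded along the orbits of
`J` and of `W`, hence does not increase along either of them. Thus `q(J y - W y) ≤ 0`, so
`J y - W y ∈ ker R ∩ K = 0`. By density `J = W` on `K`, which gives `J² = P_K` and `J R = R J`.
-/

open InnerProductSpace in
/-- A conjugation on a complex inner product space: an antilinear involution
satisfying `⟪Cf, Cg⟫ = ⟪g, f⟫`. -/
structure Conjugation (H : Type*) [NormedAddCommGroup H] [InnerProductSpace ℂ H] where
  toFun : H → H
  map_add' : ∀ x y, toFun (x + y) = toFun x + toFun y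
  map_smul' : ∀ (c : ℂ) (x : H), toFun (c • x) = (starRingEnd ℂ c) • toFun x
  invol : ∀ x, toFun (toFun x) = x
  inner_map : ∀ x y, (inner ℂ (toFun x) (toFun y) : ℂ) = inner ℂ y x

/-- `T` is `C`-symmetric: `T ⊆ C T* C`. -/
noncomputable def CSymmetric {H : Type*} [NormedAddCommGroup H] [InnerProductSpace ℂ H]
    [CompleteSpace H] (C : Conjugation H) (T : H →ₗ.[ℂ] H) : Prop :=
  ∀ x : T.domain, ∃ hx : C.toFun x ∈ T.adjoint.domain,
    C.toFun (T.adjoint ⟨C.toFun x, hx⟩) = T x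

/-- `T` is `C`-selfadjoint: `T = C T* C`. -/
noncomputable def CSelfAdjoint {H : Type*} [NormedAddCommGroup H] [InnerProductSpace ℂ H]
    [CompleteSpace H] (C : Conjugation H) (T : H →ₗ.[ℂ] H) : Prop :=
  CSymmetric C T ∧ ∀ y : H, C.toFun y ∈ T.adjoint.domain → y ∈ T.domain

/-- Composition of partially defined linear maps, with its natural (maximal) domain. -/
noncomputable def LinearPMap.pcomp {R E F G : Type*} [Ring R] [AddCommGroup E] [Module R E]
    [AddCommGroup F] [Module R F] [AddCommGroup G] [Module R G]
    (g : F →ₗ.[R] G) (f : E →ₗ.[R] F) : E →ₗ.[R] G :=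
  g.comp (f.domRestrict ((g.domain.comap f.toFun).map f.domain.subtype))
    (by
      rintro ⟨x, hx⟩
      obtain ⟨y, hy, hyx⟩ := hx.1
      have h := LinearPMap.domRestrict_apply (f := f) (x := ⟨x, hx⟩) (y := y) (by exact hyx.symm)
      erw [h]; exact hy)

/-- Natural powers of a partially defined linear map, `T^(n+1) = T ∘ T^n`, with
`T^0` the identity on the whole space. -/
noncomputable def LinearPMap.ppow {R E : Type*} [Ring R] [AddCommGroup E] [Module R E]
    (T : E →ₗ.[R] E) : ℕ → E →ₗ.[R] E
  | 0 => ⟨⊤, (⊤ : Submodule R E).subtype⟩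
  | n + 1 => T.pcomp (T.ppow n)

open scoped InnerProductSpace InnerProduct
open Set

local notation "closedRange " R:max =>
  Submodule.topologicalClosure (LinearMap.range (LinearPMap.toFun R))

theorem apply_one_le_apply_zero_of_convex {c : ℕ → ℝ} (hbdd : BddAbove (range c))
    (hc : ∀ n, 2 * c (n + 1) ≤ c n + c (n + 2)) : c 1 ≤ c 0 := by
  obtain ⟨K, hK⟩ := hbdd
  by_contra! h
  set d := c 1 - c 0
  have hgrow : ∀ n : ℕ, c 0 + n * d ≤ c n ∧ d ≤ c (n + 1) - c n := by
    intro n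
    induction n with
    | zero => simp [d]
    | succ n ih => push_cast; constructor <;> linarith [hc n]
  obtain ⟨n, hn⟩ := exists_nat_gt ((K - c 0) / d)
  rw [div_lt_iff₀ (by linarith)] at hn
  linarith [(hgrow n).1, hK (mem_range_self n)]

theorem apply_le_of_two_mul_le_add {α : Type*} {S : Set α} {q : α → ℝ} {A B : α → α}
    (hA : MapsTo A S S) (hBA : ∀ z ∈ S, B (A z) = z)
    (hq : ∀ z ∈ S, 2 * q z ≤ q (A z) + q (B z)) (hbdd : BddAbove (q '' S)) {z : α}
    (hz : z ∈ S) : q (A z) ≤ q z := by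
  have hS : ∀ n, A^[n] z ∈ S := fun n => hA.iterate n hz
  refine apply_one_le_apply_zero_of_convex (c := fun n => q (A^[n] z)) ?_ fun n => ?_
  · exact hbdd.mono (range_subset_iff.2 fun n => mem_image_of_mem q (hS n))
  · have hB : B (A^[n + 1] z) = A^[n] z := by
      rw [Function.iterate_succ_apply']; exact hBA _ (hS n)
    have := hq _ (hS (n + 1))
    rw [hB, ← Function.iterate_succ_apply' A (n + 1)] at this
    linarith

namespace Conjugation

variable {H : Type*} [NormedAddCommGroup H] [InnerProductSpace ℂ H] (C : Conjugation H)

theorem map_zero : C.toFun 0 = 0 := by simpa using C.map_smul' 0 0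

theorem map_sub (x y : H) : C.toFun (x - y) = C.toFun x - C.toFun y := by
  rw [eq_sub_iff_add_eq, ← C.map_add', sub_add_cancel]

theorem norm_map (x : H) : ‖C.toFun x‖ = ‖x‖ := by
  rw [norm_eq_sqrt_re_inner (𝕜 := ℂ), norm_eq_sqrt_re_inner (𝕜 := ℂ), C.inner_map]

theorem continuous : Continuous C.toFun :=
  (Isometry.of_dist_eq fun x y => by
    rw [dist_eq_norm, dist_eq_norm, ← map_sub, norm_map]).continuous

end Conjugation

section PartialIsometry

variable {𝕜 E F : Type*} [RCLike 𝕜] [NormedAddCommGroup E] [InnerProductSpace 𝕜 E]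
  [NormedAddCommGroup F] [InnerProductSpace 𝕜 F] {U : E →L[𝕜] F} {K : Submodule 𝕜 E}

namespace ContinuousLinearMap

theorem inner_map_map_of_norm_map (hU : ∀ x ∈ K, ‖U x‖ = ‖x‖) {x y : E} (hx : x ∈ K)
    (hy : y ∈ K) : ⟪U x, U y⟫_𝕜 = ⟪x, y⟫_𝕜 :=
  (⟨U.toLinearMap.comp K.subtype, fun v => hU v v.2⟩ : K →ₗᵢ[𝕜] F).inner_map_map ⟨x, hx⟩ ⟨y, hy⟩

theorem apply_starProjection [K.HasOrthogonalProjection] (hU : ∀ x ∈ Kᗮ, U x = 0) (x : E) :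
    U (K.starProjection x) = U x := by
  rw [← sub_eq_zero, ← map_sub, ← neg_sub, map_neg, hU _ (K.sub_starProjection_mem_orthogonal x),
    neg_zero]

variable [CompleteSpace E] [CompleteSpace F] [K.HasOrthogonalProjection]

theorem adjoint_apply_mem (hU : ∀ x ∈ Kᗮ, U x = 0) (z : F) : (U†) z ∈ K := by
  rw [← K.orthogonal_orthogonal, Submodule.mem_orthogonal]
  intro u hu
  rw [adjoint_inner_right, hU u hu, inner_zero_left]

theorem adjoint_apply_apply (hiso : ∀ x ∈ K, ‖U x‖ = ‖x‖) (hker : ∀ x ∈ Kᗮ, U x = 0) (x : E) :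
    (U†) (U x) = K.starProjection x := by
  rw [← apply_starProjection hker]
  refine (K.eq_starProjection_of_mem_of_inner_eq_zero (adjoint_apply_mem hker _)
    fun w hw => ?_).symm
  rw [inner_sub_left, adjoint_inner_left,
    inner_map_map_of_norm_map hiso (K.starProjection_apply_mem x) hw, ← inner_sub_left]
  exact K.inner_left_of_mem_orthogonal hw (K.sub_starProjection_mem_orthogonal x)

end ContinuousLinearMap

end PartialIsometry

namespace LinearPMap

variable {𝕜 E F : Type*} [RCLike 𝕜] [NormedAddCommGroup E] [InnerProductSpace 𝕜 E]
  [NormedAddCommGroup F] [InnerProductSpace 𝕜 F]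

theorem apply_mem_closedRange (R : E →ₗ.[𝕜] F) (v : R.domain) : (R v : F) ∈ closedRange R :=
  (LinearMap.range R.toFun).le_topologicalClosure (LinearMap.mem_range_self R.toFun v)

theorem coe_closedRange (R : E →ₗ.[𝕜] F) :
    (closedRange R : Set F) = _root_.closure (range R.toFun) := by
  rw [Submodule.topologicalClosure_coe, LinearMap.coe_range]

def quadForm (R : E →ₗ.[𝕜] E) (v : R.domain) : ℝ := RCLike.re ⟪(v : E), R v⟫_𝕜

theorem IsFormalAdjoint.mem_orthogonal_range_of_quadForm_eq_zero {R : E →ₗ.[𝕜] E}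
    (hR : R.IsFormalAdjoint R) (hpos : ∀ x, 0 ≤ R.quadForm x) {v : R.domain}
    (hv : R.quadForm v = 0) :
    (v : E) ∈ (LinearMap.range R.toFun)ᗮ := by
  let form : PreInnerProductSpace.Core 𝕜 R.domain :=
    { inner := fun x y => ⟪(x : E), R y⟫_𝕜
      conj_inner_symm := fun x y => by simp only [inner_conj_symm]; exact hR x y
      re_inner_nonneg := hpos
      add_left := fun x y z => by simp only [Submodule.coe_add, inner_add_left]
      smul_left := fun x y r => by simp only [Submodule.coe_smul, inner_smul_left] }
  rintro _ ⟨u, rfl⟩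
  have hCS := @InnerProductSpace.Core.inner_mul_inner_self_le 𝕜 R.domain _ _ _ form u v
  change ‖⟪(u : E), R v⟫_𝕜‖ * ‖⟪(v : E), R u⟫_𝕜‖ ≤ _ * R.quadForm v at hCS
  have hvu : ⟪(v : E), R u⟫_𝕜 = starRingEnd 𝕜 ⟪(u : E), R v⟫_𝕜 := by
    rw [← hR u v, inner_conj_symm]
  rw [hv, mul_zero, hvu, RCLike.norm_conj] at hCS
  change ⟪R u, (v : E)⟫_𝕜 = 0
  rw [hR u v]
  exact norm_eq_zero.1 (mul_self_eq_zero.1 (le_antisymm hCS (mul_self_nonneg _)))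

variable [CompleteSpace E]

theorem exists_adjoint_apply_eq {T : E →ₗ.[𝕜] F} (hT : Dense (T.domain : Set E)) {y : F}
    {w : E} (h : ∀ x : T.domain, ⟪w, x⟫_𝕜 = ⟪y, T x⟫_𝕜) :
    ∃ hy : y ∈ T.adjoint.domain, T.adjoint ⟨y, hy⟩ = w :=
  ⟨mem_adjoint_domain_of_exists y ⟨w, h⟩, adjoint_apply_eq hT _ h⟩

end LinearPMap

namespace IsSelfAdjoint

variable {𝕜 E F : Type*} [RCLike 𝕜] [NormedAddCommGroup E] [InnerProductSpace 𝕜 E]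
  [CompleteSpace E] [NormedAddCommGroup F] [InnerProductSpace 𝕜 F] [CompleteSpace F]
  {R : E →ₗ.[𝕜] E} {T : E →ₗ.[𝕜] F} {U : E →L[𝕜] F}

theorem isFormalAdjoint (hR : IsSelfAdjoint R) : R.IsFormalAdjoint R := by
  have := LinearPMap.adjoint_isFormalAdjoint hR.dense_domain
  rwa [LinearPMap.isSelfAdjoint_def.1 hR] at this

theorem exists_apply_eq (hR : IsSelfAdjoint R) {y w : E}
    (h : ∀ x : R.domain, ⟪w, x⟫_𝕜 = ⟪y, R x⟫_𝕜) : ∃ hy : y ∈ R.domain, R ⟨y, hy⟩ = w := by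
  have := LinearPMap.exists_adjoint_apply_eq hR.dense_domain h
  rwa [LinearPMap.isSelfAdjoint_def.1 hR] at this

theorem exists_apply_eq_zero_of_mem_orthogonal (hR : IsSelfAdjoint R) {x : E}
    (hx : x ∈ (LinearMap.range R.toFun)ᗮ) : ∃ h : x ∈ R.domain, R ⟨x, h⟩ = 0 :=
  hR.exists_apply_eq fun v => by
    rw [inner_zero_left]
    exact (Submodule.inner_left_of_mem_orthogonal (LinearMap.mem_range_self R.toFun v) hx).symm

theorem exists_apply_starProjection_eq (hR : IsSelfAdjoint R) {x : E} (hx : x ∈ R.domain) :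
    ∃ h : (closedRange R).starProjection x ∈ R.domain, R ⟨_, h⟩ = R ⟨x, hx⟩ := by
  obtain ⟨hk, hk0⟩ := hR.exists_apply_eq_zero_of_mem_orthogonal
    ((LinearMap.range R.toFun).orthogonal_closure ▸
      (closedRange R).sub_starProjection_mem_orthogonal x)
  refine ⟨by simpa using R.domain.sub_mem hx hk, ?_⟩
  rw [← sub_zero (R ⟨x, hx⟩), ← hk0, ← LinearPMap.map_sub]
  exact congrArg R (Subtype.ext (sub_sub_cancel x _).symm)

theorem mem_adjoint_domain_of_adjoint_apply_mem (hR : IsSelfAdjoint R)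
    (hdom : T.domain = R.domain)
    (hTUR : ∀ (x : T.domain) (hx : (x : E) ∈ R.domain), T x = U (R ⟨x, hx⟩)) {z : F}
    (hz : (U†) z ∈ R.domain) : z ∈ T.adjoint.domain :=
  LinearPMap.mem_adjoint_domain_of_exists z ⟨R ⟨_, hz⟩, fun x => by
    rw [hTUR x (hdom ▸ x.2), ← ContinuousLinearMap.adjoint_inner_left]
    exact hR.isFormalAdjoint ⟨_, hz⟩ ⟨x, hdom ▸ x.2⟩⟩

theorem exists_apply_adjoint_apply_eq_adjoint (hR : IsSelfAdjoint R)
    (hdom : T.domain = R.domain)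
    (hTUR : ∀ (x : T.domain) (hx : (x : E) ∈ R.domain), T x = U (R ⟨x, hx⟩))
    (z : T.adjoint.domain) : ∃ h : (U†) z ∈ R.domain, R ⟨_, h⟩ = T.adjoint z :=
  hR.exists_apply_eq fun v => by
    have hT : Dense (T.domain : Set E) := hdom ▸ hR.dense_domain
    have hv : (v : E) ∈ T.domain := by rw [hdom]; exact v.2
    rw [LinearPMap.adjoint_isFormalAdjoint hT z ⟨v, hv⟩, hTUR _ v.2,
      ContinuousLinearMap.adjoint_inner_left]

end IsSelfAdjoint

section CSelfAdjoint

variable {H : Type*} [NormedAddCommGroup H] [InnerProductSpace ℂ H] [CompleteSpace H]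

/-- The factors `R = |T|` and `U` of the polar decomposition `T = U R` of a `C`-selfadjoint
operator `T`. The last three fields say `R U† = C U R C` including domains, which is
`T* = C T C`. -/
structure CSelfAdjointPolar (C : Conjugation H) (R : H →ₗ.[ℂ] H) (U : H →L[ℂ] H) : Prop where
  isSelfAdjoint : IsSelfAdjoint R
  norm_map : ∀ x ∈ closedRange R, ‖U x‖ = ‖x‖
  map_orthogonal : ∀ x ∈ (closedRange R)ᗮ, U x = 0
  adjoint_conj_mem : ∀ y ∈ R.domain, (U†) (C.toFun y) ∈ R.domain
  apply_adjoint_conj : ∀ (y : H) (hy : y ∈ R.domain),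
    R ⟨_, adjoint_conj_mem y hy⟩ = C.toFun (U (R ⟨y, hy⟩))
  mem_domain_of_adjoint_conj_mem : ∀ y, (U†) (C.toFun y) ∈ R.domain → y ∈ R.domain

theorem CSelfAdjoint.cSelfAdjointPolar {C : Conjugation H} {T R : H →ₗ.[ℂ] H} {U : H →L[ℂ] H}
    (hT : CSelfAdjoint C T) (hR : IsSelfAdjoint R)
    (hiso : ∀ x ∈ closedRange R, ‖U x‖ = ‖x‖) (hker : ∀ x ∈ (closedRange R)ᗮ, U x = 0)
    (hdom : T.domain = R.domain)
    (hTUR : ∀ (x : T.domain) (hx : (x : H) ∈ R.domain), T x = U (R ⟨x, hx⟩)) :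
    CSelfAdjointPolar C R U := by
  have hadj (y : H) (hy : y ∈ R.domain) :
      ∃ h : (U†) (C.toFun y) ∈ R.domain, R ⟨_, h⟩ = C.toFun (U (R ⟨y, hy⟩)) := by
    obtain ⟨hCy, hT'⟩ := hT.1 ⟨y, hdom ▸ hy⟩
    obtain ⟨h, hR'⟩ := hR.exists_apply_adjoint_apply_eq_adjoint hdom hTUR ⟨_, hCy⟩
    refine ⟨h, ?_⟩
    rw [hR', ← C.invol (T.adjoint _), hT', hTUR]
  exact ⟨hR, hiso, hker, fun y hy => (hadj y hy).1, fun y hy => (hadj y hy).2, fun y hy =>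
    hdom ▸ hT.2 y (hR.mem_adjoint_domain_of_adjoint_apply_mem hdom hTUR hy)⟩

namespace CSelfAdjointPolar

variable {C : Conjugation H} {R : H →ₗ.[ℂ] H} {U : H →L[ℂ] H}

theorem adjoint_conj_conj_apply (h : CSelfAdjointPolar C R U) (x : H) :
    (U†) (C.toFun (C.toFun (U x))) = (closedRange R).starProjection x := by
  rw [C.invol, ContinuousLinearMap.adjoint_apply_apply h.norm_map h.map_orthogonal]

theorem conj_apply_mem_domain (h : CSelfAdjointPolar C R U) {v : H} (hv : v ∈ R.domain) :
    C.toFun (U v) ∈ R.domain :=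
  h.mem_domain_of_adjoint_conj_mem _ <| by
    rw [h.adjoint_conj_conj_apply]
    exact (h.isSelfAdjoint.exists_apply_starProjection_eq hv).1

theorem conj_apply_apply_conj_apply (h : CSelfAdjointPolar C R U) {v : H} (hv : v ∈ R.domain) :
    C.toFun (U (R ⟨_, h.conj_apply_mem_domain hv⟩)) = R ⟨v, hv⟩ := by
  obtain ⟨hP, hPv⟩ := h.isSelfAdjoint.exists_apply_starProjection_eq hv
  rw [← h.apply_adjoint_conj, ← hPv]
  exact congrArg R (Subtype.ext (h.adjoint_conj_conj_apply v))

theorem apply_conj_apply (h : CSelfAdjointPolar C R U) {v : H} (hv : v ∈ R.domain) :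
    R ⟨_, h.conj_apply_mem_domain hv⟩ = (U†) (C.toFun (R ⟨v, hv⟩)) := by
  rw [← h.conj_apply_apply_conj_apply hv, h.adjoint_conj_conj_apply,
    Submodule.starProjection_eq_self_iff.2 (R.apply_mem_closedRange _)]

theorem conj_apply_adjoint_conj (h : CSelfAdjointPolar C R U) {m : H} (hm : m ∈ closedRange R) :
    C.toFun (U ((U†) (C.toFun m))) = m := by
  have hcont : Continuous fun x => C.toFun (U ((U†) (C.toFun x))) :=
    C.continuous.comp (U.continuous.comp ((U†).continuous.comp C.continuous))
  have hrange : EqOn (fun x => C.toFun (U ((U†) (C.toFun x)))) id (range R.toFun) := by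
    rintro _ ⟨⟨v, hv⟩, rfl⟩
    change C.toFun (U ((U†) (C.toFun (R ⟨v, hv⟩)))) = R ⟨v, hv⟩
    rw [← h.apply_conj_apply hv, h.conj_apply_apply_conj_apply]
  exact hrange.closure hcont continuous_id (R.coe_closedRange ▸ hm)

theorem conj_apply_mem (h : CSelfAdjointPolar C R U) {m : H} (hm : m ∈ closedRange R) :
    C.toFun (U m) ∈ closedRange R := by
  have hrange : MapsTo (fun x => C.toFun (U x)) (range R.toFun) (range R.toFun) := by
    rintro _ ⟨⟨v, hv⟩, rfl⟩
    exact ⟨⟨_, h.adjoint_conj_mem v hv⟩, h.apply_adjoint_conj v hv⟩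
  have := hrange.closure (C.continuous.comp U.continuous)
  rw [← R.coe_closedRange] at this
  exact this hm

theorem inner_conj_apply (h : CSelfAdjointPolar C R U) {a b : H} (ha : a ∈ closedRange R)
    (hb : b ∈ closedRange R) : ⟪C.toFun (U a), C.toFun (U b)⟫_ℂ = ⟪b, a⟫_ℂ := by
  rw [C.inner_map, ContinuousLinearMap.inner_map_map_of_norm_map h.norm_map hb ha]

theorem inner_adjoint_conj (h : CSelfAdjointPolar C R U) {a b : H} (ha : a ∈ closedRange R)
    (hb : b ∈ closedRange R) : ⟪(U†) (C.toFun a), (U†) (C.toFun b)⟫_ℂ = ⟪b, a⟫_ℂ := by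
  have hW := ContinuousLinearMap.adjoint_apply_mem h.map_orthogonal
  rw [← h.inner_conj_apply (hW _) (hW _), h.conj_apply_adjoint_conj ha,
    h.conj_apply_adjoint_conj hb]

theorem norm_conj_apply (h : CSelfAdjointPolar C R U) {a : H} (ha : a ∈ closedRange R) :
    ‖C.toFun (U a)‖ = ‖a‖ := by
  rw [C.norm_map, h.norm_map a ha]

theorem norm_adjoint_conj (h : CSelfAdjointPolar C R U) {a : H} (ha : a ∈ closedRange R) :
    ‖(U†) (C.toFun a)‖ = ‖a‖ := by
  rw [← h.norm_conj_apply (ContinuousLinearMap.adjoint_apply_mem h.map_orthogonal _),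
    h.conj_apply_adjoint_conj ha]

-- `J = C U` and `W = U† C`, restricted to `dom R`.
noncomputable def domConj (h : CSelfAdjointPolar C R U) (v : R.domain) : R.domain :=
  ⟨C.toFun (U v), h.conj_apply_mem_domain v.2⟩

noncomputable def domAdjointConj (h : CSelfAdjointPolar C R U) (v : R.domain) : R.domain :=
  ⟨(U†) (C.toFun v), h.adjoint_conj_mem v v.2⟩

theorem quadForm_domConj_sub_domAdjointConj (h : CSelfAdjointPolar C R U) {z : R.domain}
    (hz : (z : H) ∈ closedRange R) :
    R.quadForm (h.domConj z - h.domAdjointConj z) =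
      R.quadForm (h.domConj z) + R.quadForm (h.domAdjointConj z) - 2 * R.quadForm z := by
  have hJ : ⟪(h.domConj z : H), R (h.domAdjointConj z)⟫_ℂ = ⟪(R z : H), z⟫_ℂ :=
    (h.apply_adjoint_conj z z.2).symm ▸ h.inner_conj_apply hz (R.apply_mem_closedRange z)
  have hW : ⟪(h.domAdjointConj z : H), R (h.domConj z)⟫_ℂ = ⟪(R z : H), z⟫_ℂ :=
    (h.apply_conj_apply z.2).symm ▸ h.inner_adjoint_conj hz (R.apply_mem_closedRange z)
  simp only [LinearPMap.quadForm, LinearPMap.map_sub, Submodule.coe_sub, inner_sub_left,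
    inner_sub_right, map_sub, hJ, hW]
  rw [inner_re_symm (R z : H)]
  ring

theorem quadForm_domConj_le (h : CSelfAdjointPolar C R U) (hpos : ∀ x, 0 ≤ R.quadForm x)
    {y : R.domain} (hy : (y : H) ∈ closedRange R) :
    R.quadForm (h.domConj y) ≤ R.quadForm y ∧ R.quadForm (h.domAdjointConj y) ≤ R.quadForm y := by
  set S := {v : R.domain | (v : H) ∈ closedRange R ∧ ‖(v : H)‖ = ‖(y : H)‖ ∧ ‖R v‖ = ‖R y‖}
  have hJ : MapsTo h.domConj S S := fun v ⟨hv, hnorm, hRnorm⟩ =>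
    ⟨h.conj_apply_mem hv, (h.norm_conj_apply hv).trans hnorm, by
      rw [domConj, h.apply_conj_apply v.2, h.norm_adjoint_conj (R.apply_mem_closedRange v)]
      exact hRnorm⟩
  have hW : MapsTo h.domAdjointConj S S := fun v ⟨hv, hnorm, hRnorm⟩ =>
    ⟨ContinuousLinearMap.adjoint_apply_mem h.map_orthogonal _,
      (h.norm_adjoint_conj hv).trans hnorm, by
      rw [domAdjointConj, h.apply_adjoint_conj v v.2, h.norm_conj_apply (R.apply_mem_closedRange v)]
      exact hRnorm⟩
  have hWJ : ∀ v ∈ S, h.domAdjointConj (h.domConj v) = v := fun v hv =>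
    Subtype.ext ((h.adjoint_conj_conj_apply v).trans (Submodule.starProjection_eq_self_iff.2 hv.1))
  have hJW : ∀ v ∈ S, h.domConj (h.domAdjointConj v) = v := fun v hv =>
    Subtype.ext (h.conj_apply_adjoint_conj hv.1)
  have hconv (v) (hv : v ∈ S) :
      2 * R.quadForm v ≤ R.quadForm (h.domConj v) + R.quadForm (h.domAdjointConj v) := by
    linarith [h.quadForm_domConj_sub_domAdjointConj hv.1,
      hpos (h.domConj v - h.domAdjointConj v)]
  have hbdd : BddAbove (R.quadForm '' S) := by
    refine ⟨‖(y : H)‖ * ‖R y‖, ?_⟩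
    rintro _ ⟨v, ⟨-, hnorm, hRnorm⟩, rfl⟩
    rw [← hnorm, ← hRnorm]
    exact re_inner_le_norm _ _
  have hyS : y ∈ S := ⟨hy, rfl, rfl⟩
  exact ⟨apply_le_of_two_mul_le_add hJ hWJ hconv hbdd hyS, apply_le_of_two_mul_le_add hW hJW
    (fun v hv => (hconv v hv).trans_eq (add_comm _ _)) hbdd hyS⟩

theorem conj_apply_eq_adjoint_conj_of_mem_domain (h : CSelfAdjointPolar C R U)
    (hpos : ∀ x, 0 ≤ R.quadForm x) {y : H} (hyK : y ∈ closedRange R) (hyD : y ∈ R.domain) :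
    C.toFun (U y) = (U†) (C.toFun y) := by
  set z : R.domain := h.domConj ⟨y, hyD⟩ - h.domAdjointConj ⟨y, hyD⟩
  have hz : R.quadForm z = 0 := le_antisymm (by
    linarith [h.quadForm_domConj_sub_domAdjointConj (z := ⟨y, hyD⟩) hyK,
      h.quadForm_domConj_le hpos (y := ⟨y, hyD⟩) hyK]) (hpos z)
  have hzK : (z : H) ∈ closedRange R :=
    sub_mem (h.conj_apply_mem hyK) (ContinuousLinearMap.adjoint_apply_mem h.map_orthogonal _)
  have hzK' := h.isSelfAdjoint.isFormalAdjoint.mem_orthogonal_range_of_quadForm_eq_zero hpos hz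
  rw [← Submodule.orthogonal_closure] at hzK'
  exact sub_eq_zero.1 (Submodule.disjoint_def.1 (Submodule.orthogonal_disjoint _) _ hzK hzK')

theorem conj_apply_eq_adjoint_conj (h : CSelfAdjointPolar C R U) (hpos : ∀ x, 0 ≤ R.quadForm x)
    {m : H} (hm : m ∈ closedRange R) : C.toFun (U m) = (U†) (C.toFun m) := by
  set P := (closedRange R).starProjection
  have hPK (x : H) : P x ∈ closedRange R := (closedRange R).starProjection_apply_mem x
  have hext : (fun x => C.toFun (U (P x))) = fun x => (U†) (C.toFun (P x)) :=
    Continuous.ext_on h.isSelfAdjoint.dense_domain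
      (C.continuous.comp (U.continuous.comp P.continuous))
      ((U†).continuous.comp (C.continuous.comp P.continuous)) fun x hx =>
        h.conj_apply_eq_adjoint_conj_of_mem_domain hpos (hPK x)
          (h.isSelfAdjoint.exists_apply_starProjection_eq hx).1
  simpa [P, Submodule.starProjection_eq_self_iff.2 hm] using congrFun hext m

theorem conj_apply_conj_apply (h : CSelfAdjointPolar C R U) (hpos : ∀ x, 0 ≤ R.quadForm x)
    {m : H} (hm : m ∈ closedRange R) : C.toFun (U (C.toFun (U m))) = m := by
  rw [h.conj_apply_eq_adjoint_conj hpos hm, h.conj_apply_adjoint_conj hm]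

theorem mem_domain_iff (h : CSelfAdjointPolar C R U) (hpos : ∀ x, 0 ≤ R.quadForm x) (x : H) :
    x ∈ R.domain ↔ C.toFun (U x) ∈ R.domain := by
  refine ⟨h.conj_apply_mem_domain, fun hx => ?_⟩
  set P := (closedRange R).starProjection
  have hJx : C.toFun (U x) = (U†) (C.toFun (P x)) := by
    rw [← ContinuousLinearMap.apply_starProjection h.map_orthogonal x,
      h.conj_apply_eq_adjoint_conj hpos ((closedRange R).starProjection_apply_mem x)]
  have hP : P x ∈ R.domain := h.mem_domain_of_adjoint_conj_mem _ (hJx ▸ hx)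
  obtain ⟨hk, -⟩ := h.isSelfAdjoint.exists_apply_eq_zero_of_mem_orthogonal
    ((LinearMap.range R.toFun).orthogonal_closure ▸
      (closedRange R).sub_starProjection_mem_orthogonal x)
  simpa [P] using R.domain.add_mem hP hk

theorem conj_apply_apply (h : CSelfAdjointPolar C R U) (hpos : ∀ x, 0 ≤ R.quadForm x)
    (x : R.domain) (hx : C.toFun (U x) ∈ R.domain) : C.toFun (U (R x)) = R ⟨_, hx⟩ :=
  (h.conj_apply_eq_adjoint_conj hpos (R.apply_mem_closedRange x)).trans
    (h.apply_conj_apply x.2).symm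

end CSelfAdjointPolar

end CSelfAdjoint
theorem stmt_5_general {H : Type*} [NormedAddCommGroup H] [InnerProductSpace ℂ H] [CompleteSpace H]
    (C : Conjugation H) (T R : H →ₗ.[ℂ] H) (U : H →L[ℂ] H)
    (hCsa : CSelfAdjoint C T)
    -- `R` plays the role of `|T|`: a positive selfadjoint operator
    (hRsa : R.adjoint = R)
    (hRpos : ∀ x : R.domain, 0 ≤ ((inner ℂ (x : H) (R x) : ℂ)).re)
    -- `U` is a partial isometry with initial space `closure (ran R)`,
    -- vanishing on its orthogonal complement
    (hUiso : ∀ x ∈ (LinearMap.range R.toFun).topologicalClosure, ‖U x‖ = ‖x‖)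
    (hUker : ∀ x ∈ ((LinearMap.range R.toFun).topologicalClosure : Submodule ℂ H)ᗮ, U x = 0)
    -- `T = U R`, including equality of domains
    (hdom : T.domain = R.domain)
    (hTUR : ∀ (x : T.domain) (hx : (x : H) ∈ R.domain), (T x : H) = U (R ⟨x, hx⟩)) :
    ∃ J : H → H,
      -- `J` is antilinear
      (∀ x y, J (x + y) = J x + J y) ∧
      (∀ (c : ℂ) (x : H), J (c • x) = (starRingEnd ℂ c) • J x) ∧
      -- `J` is a partial conjugation with initial space `closure (ran |T|)`:
      -- it is antiunitary there, vanishes on the orthogonal complement, and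
      -- `J²` is the orthogonal projection onto `closure (ran |T|)`
      (∀ f ∈ (LinearMap.range R.toFun).topologicalClosure,
        ∀ g ∈ (LinearMap.range R.toFun).topologicalClosure,
          (inner ℂ (J f) (J g) : ℂ) = inner ℂ g f) ∧
      (∀ x ∈ ((LinearMap.range R.toFun).topologicalClosure : Submodule ℂ H)ᗮ, J x = 0) ∧
      (∀ x ∈ (LinearMap.range R.toFun).topologicalClosure, J (J x) = x) ∧
      (∀ x ∈ ((LinearMap.range R.toFun).topologicalClosure : Submodule ℂ H)ᗮ, J (J x) = 0) ∧
      -- `U = C J`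
      (∀ x : H, U x = C.toFun (J x)) ∧
      -- `J` commutes with `|T|`:  `J |T| = |T| J`
      (∀ x : H, x ∈ R.domain ↔ J x ∈ R.domain) ∧
      (∀ (x : R.domain) (hx : J x ∈ R.domain), J (R x) = R ⟨J x, hx⟩) := by
  have h := hCsa.cSelfAdjointPolar hRsa hUiso hUker hdom hTUR
  have hpos : ∀ x, 0 ≤ R.quadForm x := hRpos
  refine ⟨fun x => C.toFun (U x), fun x y => ?_, fun c x => ?_,
    fun f hf g hg => h.inner_conj_apply hf hg, fun x hx => ?_,
    fun x hx => h.conj_apply_conj_apply hpos hx, fun x hx => ?_, fun x => (C.invol _).symm,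
    h.mem_domain_iff hpos, h.conj_apply_apply hpos⟩
  · simp only [map_add, C.map_add']
  · simp only [map_smul, C.map_smul']
  · simp only [hUker x hx, C.map_zero]
  · simp only [hUker x hx, C.map_zero, map_zero]

/-- if `T` is densely defined and `C`-selfadjoint with polar decomposition
`T = U |T|` (here `R = |T|` is the positive selfadjoint factor and `U` is the partial
isometry with initial space the closure of `ran |T|` and kernel `ker T`, which
characterizes the polar decomposition uniquely), then there is an antilinear partial
conjugation `J` with `U = C J` and `J |T| = |T| J`. -/
theorem stmt_5 {H : Type*} [NormedAddCommGroup H] [InnerProductSpace ℂ H] [CompleteSpace H]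
    (C : Conjugation H) (T R : H →ₗ.[ℂ] H) (U : H →L[ℂ] H)
    (hdense : Dense (T.domain : Set H)) (hCsa : CSelfAdjoint C T)
    -- `R` plays the role of `|T|`: a positive selfadjoint operator
    (hRsa : R.adjoint = R)
    (hRpos : ∀ x : R.domain, 0 ≤ ((inner ℂ (x : H) (R x) : ℂ)).re)
    -- `U` is a partial isometry with initial space `closure (ran R)`,
    -- vanishing on its orthogonal complement
    (hUiso : ∀ x ∈ (LinearMap.range R.toFun).topologicalClosure, ‖U x‖ = ‖x‖)
    (hUker : ∀ x ∈ ((LinearMap.range R.toFun).topologicalClosure : Submodule ℂ H)ᗮ, U x = 0)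
    -- `T = U R`, including equality of domains
    (hdom : T.domain = R.domain)
    (hTUR : ∀ (x : T.domain) (hx : (x : H) ∈ R.domain), (T x : H) = U (R ⟨x, hx⟩)) :
    ∃ J : H → H,
      -- `J` is antilinear
      (∀ x y, J (x + y) = J x + J y) ∧
      (∀ (c : ℂ) (x : H), J (c • x) = (starRingEnd ℂ c) • J x) ∧
      -- `J` is a partial conjugation with initial space `closure (ran |T|)`:
      -- it is antiunitary there, vanishes on the orthogonal complement, and
      -- `J²` is the orthogonal projection onto `closure (ran |T|)`
      (∀ f ∈ (LinearMap.range R.toFun).topologicalClosure,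
        ∀ g ∈ (LinearMap.range R.toFun).topologicalClosure,
          (inner ℂ (J f) (J g) : ℂ) = inner ℂ g f) ∧
      (∀ x ∈ ((LinearMap.range R.toFun).topologicalClosure : Submodule ℂ H)ᗮ, J x = 0) ∧
      (∀ x ∈ (LinearMap.range R.toFun).topologicalClosure, J (J x) = x) ∧
      (∀ x ∈ ((LinearMap.range R.toFun).topologicalClosure : Submodule ℂ H)ᗮ, J (J x) = 0) ∧
      -- `U = C J`
      (∀ x : H, U x = C.toFun (J x)) ∧
      -- `J` commutes with `|T|`:  `J |T| = |T| J`
      (∀ x : H, x ∈ R.domain ↔ J x ∈ R.domain) ∧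
      (∀ (x : R.domain) (hx : J x ∈ R.domain), J (R x) = R ⟨J x, hx⟩) :=
  stmt_5_general C T R U hCsa hRsa hRpos hUiso hUker hdom hTUR
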